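/- Under the beta model, Var(p | p̃) = γ p̃(1-p̃) + γ² p̃(1-p̃)(g*'(p̃) - 2), where g*(p̃) = p̃(1-p̃) f'(p̃)/f(p̃). -/

import Mathlib

/-!
The kernel `k(t, p) = t ^ (p/γ - 1) (1 - t) ^ ((1 - p)/γ - 1)` satisfies
`t (1 - t) ∂ₜ k = (p/γ + 2t - 1 - t/γ) k`. Integrating against `pʲ h(p) / B(p)` turns this
into the moment recursion `t (1 - t) mⱼ' = mⱼ₊₁/γ + (2t - 1 - t/γ) mⱼ` with `f = m₀`. Hence
`g = m₁/(γ m₀) + 2t - 1 - t/γ`, and differentiating once more expresses `g'` through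
`m₂/m₀ - (m₁/m₀)²`, the posterior variance.
-/

open MeasureTheory Set Function Filter Topology

theorem hasDerivAt_setIntegral_mul_of_continuousOn {α : Type*} [TopologicalSpace α]
    [T2Space α] [MeasurableSpace α] [OpensMeasurableSpace α] {μ : Measure α} {U : Set ℝ} {K : Set α}
    (hU : IsOpen U) (hK : IsCompact K) {φ φ' : ℝ → α → ℝ}
    (hφ : ContinuousOn (uncurry φ) (U ×ˢ K)) (hφ' : ContinuousOn (uncurry φ') (U ×ˢ K))
    (hderiv : ∀ t ∈ U, ∀ p ∈ K, HasDerivAt (φ · p) (φ' t p) t)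
    {w : α → ℝ} (hw : IntegrableOn w K μ) {t₀ : ℝ} (ht₀ : t₀ ∈ U) :
    HasDerivAt (fun t => ∫ p in K, φ t p * w p ∂μ) (∫ p in K, φ' t₀ p * w p ∂μ) t₀ := by
  obtain ⟨ε, hε, hεU⟩ := Metric.nhds_basis_closedBall.mem_iff.1 (hU.mem_nhds ht₀)
  obtain ⟨C, hC⟩ := ((isCompact_closedBall t₀ ε).prod hK).exists_bound_of_continuousOn
    (hφ'.mono (prod_mono hεU subset_rfl))
  refine (hasDerivAt_integral_of_dominated_loc_of_deriv_le (μ := μ.restrict K)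
    (F := fun t p => φ t p * w p) (F' := fun t p => φ' t p * w p)
    (bound := fun p => C * ‖w p‖) (Metric.closedBall_mem_nhds t₀ hε) ?_
    (hw.continuousOn_mul (hφ.uncurry_left t₀ ht₀) hK)
    (hw.continuousOn_mul (hφ'.uncurry_left t₀ ht₀) hK).aestronglyMeasurable ?_
    (hw.norm.const_mul C) ?_).2
  · filter_upwards [hU.mem_nhds ht₀] with t ht
    exact (hw.continuousOn_mul (hφ.uncurry_left t ht) hK).aestronglyMeasurable
  · refine ae_restrict_of_forall_mem hK.measurableSet fun p hp t ht => ?_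
    rw [norm_mul]
    exact mul_le_mul_of_nonneg_right (hC (t, p) ⟨ht, hp⟩) (norm_nonneg _)
  · exact ae_restrict_of_forall_mem hK.measurableSet fun p hp t ht =>
      (hderiv t (hεU ht) p hp).mul_const (w p)

theorem variance_eq_of_moment_ode {γ : ℝ} (hγ : γ ≠ 0) {f m₁ : ℝ → ℝ} {m₂ t : ℝ}
    (ht : t ∈ Ioo 0 1) (hft : f t ≠ 0)
    (hf : ∀ s ∈ Ioo (0 : ℝ) 1,
      HasDerivAt f ((m₁ s / γ + (2 * s - 1 - s / γ) * f s) / (s * (1 - s))) s)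
    (hm₁ : HasDerivAt m₁ ((m₂ / γ + (2 * t - 1 - t / γ) * m₁ t) / (t * (1 - t))) t) :
    m₂ / f t - (m₁ t / f t) ^ 2
      = γ * (t * (1 - t))
        + γ ^ 2 * (t * (1 - t)) * (deriv (fun s => s * (1 - s) * deriv f s / f s) t - 2) := by
  have hG : (fun s => s * (1 - s) * deriv f s / f s)
      =ᶠ[𝓝 t] fun s => m₁ s / f s / γ + (2 * s - 1 - s / γ) := by
    filter_upwards [isOpen_Ioo.mem_nhds ht, (hf t ht).continuousAt.eventually_ne hft]
      with s hs hfs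
    have := hs.1.ne'
    have := sub_ne_zero.2 hs.2.ne'
    rw [(hf s hs).deriv]
    field_simp
  have hG' : HasDerivAt (fun s => m₁ s / f s / γ + (2 * s - 1 - s / γ)) _ t :=
    ((hm₁.div (hf t ht) hft).div_const γ).add
      ((((hasDerivAt_id t).const_mul 2).sub_const 1).sub ((hasDerivAt_id t).div_const γ))
  rw [hG.deriv_eq, hG'.deriv]
  have := ht.1.ne'
  have := sub_ne_zero.2 ht.2.ne'
  field_simp
  ring

theorem integrableOn_rpow_mul_one_sub_rpow {a b : ℝ} (ha : -1 < a) (hb : -1 < b) :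
    IntegrableOn (fun x : ℝ => x ^ a * (1 - x) ^ b) (Ioo 0 1) := by
  have hβ := (Complex.betaIntegral_convergent (u := a + 1) (v := b + 1)
    (by simp; linarith) (by simp; linarith)).norm
  rw [intervalIntegrable_iff_integrableOn_Ioo_of_le zero_le_one] at hβ
  refine hβ.congr_fun (fun x ⟨hx0, hx1⟩ => ?_) measurableSet_Ioo
  have h1 : (1 : ℂ) - x = ((1 - x : ℝ) : ℂ) := by push_cast; ring
  simp only [norm_mul, h1, Complex.norm_cpow_eq_rpow_re_of_pos hx0,
    Complex.norm_cpow_eq_rpow_re_of_pos (sub_pos.2 hx1)]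
  simp

noncomputable section

/-- The unnormalised `Beta(p/γ, (1 - p)/γ)` density at `t`. -/
def betaKernel (γ p t : ℝ) : ℝ := t ^ (p / γ - 1) * (1 - t) ^ ((1 - p) / γ - 1)

def betaNormalizer (γ p : ℝ) : ℝ := ∫ x in Ioo 0 1, betaKernel γ p x

/-- With `w = pʲ h / B` this is the `j`-th unnormalised posterior moment of `p` given `p̃ = t`. -/
def betaMixture (γ : ℝ) (w : ℝ → ℝ) (t : ℝ) : ℝ := ∫ p in Ioo 0 1, betaKernel γ p t * w p

theorem continuousOn_betaKernel (γ : ℝ) (s : Set ℝ) :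
    ContinuousOn (uncurry fun t p => betaKernel γ p t) (Ioo 0 1 ×ˢ s) := by
  unfold betaKernel
  fun_prop (disch := grind)

theorem hasDerivAt_betaKernel (γ p : ℝ) {t : ℝ} (ht : t ∈ Ioo 0 1) :
    HasDerivAt (betaKernel γ p)
      ((p / γ + 2 * t - 1 - t / γ) / (t * (1 - t)) * betaKernel γ p t) t := by
  obtain ⟨ht0, ht1⟩ := ht
  have h1 : 0 < 1 - t := by linarith
  refine (((hasDerivAt_id t).rpow_const (p := p / γ - 1) (Or.inl ht0.ne')).mul
    (((hasDerivAt_id t).const_sub 1).rpow_const (p := (1 - p) / γ - 1)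
      (Or.inl h1.ne'))).congr_deriv ?_
  simp only [betaKernel, id, Real.rpow_sub_one ht0.ne', Real.rpow_sub_one h1.ne']
  field_simp
  ring

theorem measurable_betaNormalizer (γ : ℝ) : Measurable (betaNormalizer γ) := by
  have : Measurable (uncurry fun p x => betaKernel γ p x) := by
    unfold betaKernel
    fun_prop
  exact (this.stronglyMeasurable.integral_prod_right
    (ν := volume.restrict (Ioo 0 1))).measurable

theorem exists_pos_le_betaNormalizer {γ : ℝ} (hγ : 0 < γ) :
    ∃ c > 0, ∀ p ∈ Ioo (0 : ℝ) 1, c ≤ betaNormalizer γ p := by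
  have hγ' : 0 < 1 / γ := by positivity
  refine ⟨∫ x in Ioo 0 1, x ^ (1 / γ) * (1 - x) ^ (1 / γ), ?_, fun p ⟨hp0, hp1⟩ => ?_⟩
  · rw [← integral_Icc_eq_integral_Ioo, integral_Icc_eq_integral_Ioc,
      ← intervalIntegral.integral_of_le zero_le_one]
    refine intervalIntegral.intervalIntegral_pos_of_pos_on ?_ (fun x ⟨hx0, hx1⟩ => ?_)
      zero_lt_one
    · exact (by fun_prop (disch := intros; positivity) :
        Continuous fun x : ℝ => x ^ (1 / γ) * (1 - x) ^ (1 / γ)).intervalIntegrable _ _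
    · have : 0 < 1 - x := by linarith
      positivity
  · have ha : p / γ - 1 ≤ 1 / γ := by
      have : p / γ ≤ 1 / γ := by gcongr
      linarith
    have hb : (1 - p) / γ - 1 ≤ 1 / γ := by
      have : (1 - p) / γ ≤ 1 / γ := by gcongr; linarith
      linarith
    refine setIntegral_mono_on (integrableOn_rpow_mul_one_sub_rpow (by linarith) (by linarith))
      (integrableOn_rpow_mul_one_sub_rpow ?_ ?_) measurableSet_Ioo fun x ⟨hx0, hx1⟩ => ?_
    · have : 0 < p / γ := by positivity
      linarith
    · have : 0 < (1 - p) / γ := div_pos (by linarith) hγ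
      linarith
    have h1 : 0 < 1 - x := by linarith
    exact mul_le_mul (Real.rpow_le_rpow_of_exponent_ge hx0 hx1.le ha)
      (Real.rpow_le_rpow_of_exponent_ge h1 (by linarith) hb) (by positivity) (by positivity)

theorem integrableOn_div_betaNormalizer {γ : ℝ} (hγ : 0 < γ) {h : ℝ → ℝ}
    (hh : IntegrableOn h (Ioo 0 1)) :
    IntegrableOn (fun p => h p / betaNormalizer γ p) (Ioo 0 1) := by
  obtain ⟨c, hc, hcB⟩ := exists_pos_le_betaNormalizer hγ
  simp only [div_eq_mul_inv]
  refine hh.mul_bdd (c := c⁻¹) (measurable_betaNormalizer γ).inv.aestronglyMeasurable ?_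
  filter_upwards [ae_restrict_mem measurableSet_Ioo] with p hp
  rw [norm_inv, Real.norm_of_nonneg (hc.trans_le (hcB p hp)).le]
  exact inv_anti₀ hc (hcB p hp)

theorem hasDerivAt_betaMixture (γ : ℝ) {w : ℝ → ℝ} (hw : IntegrableOn w (Ioo 0 1)) {t : ℝ}
    (ht : t ∈ Ioo 0 1) :
    HasDerivAt (betaMixture γ w)
      ((betaMixture γ (fun p => p * w p) t / γ + (2 * t - 1 - t / γ) * betaMixture γ w t)
        / (t * (1 - t))) t := by
  have hw' : IntegrableOn w (Icc 0 1) := (integrableOn_Icc_iff_integrableOn_Ioo).2 hw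
  have hIcc : ∀ v, betaMixture γ v = fun s => ∫ p in Icc 0 1, betaKernel γ p s * v p :=
    fun v => funext fun s => integral_Icc_eq_integral_Ioo.symm
  have hφ' : ContinuousOn (uncurry fun t p =>
      (p / γ + 2 * t - 1 - t / γ) / (t * (1 - t)) * betaKernel γ p t)
      (Ioo 0 1 ×ˢ Icc 0 1) := by
    refine ContinuousOn.mul (ContinuousOn.div (by fun_prop) (by fun_prop) ?_)
      (continuousOn_betaKernel γ _)
    rintro ⟨t, p⟩ ⟨⟨ht0, ht1⟩, -⟩
    exact mul_ne_zero ht0.ne' (sub_ne_zero.2 ht1.ne')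
  have hk := hw'.continuousOn_mul ((continuousOn_betaKernel γ _).uncurry_left t ht)
    isCompact_Icc
  have hpk := (hw'.continuousOn_mul (continuousOn_id' _) isCompact_Icc).continuousOn_mul
    ((continuousOn_betaKernel γ _).uncurry_left t ht) isCompact_Icc
  rw [hIcc]
  convert hasDerivAt_setIntegral_mul_of_continuousOn isOpen_Ioo isCompact_Icc
    (continuousOn_betaKernel γ _) hφ' (fun t ht p _ => hasDerivAt_betaKernel γ p ht) hw' ht
    using 1
  simp only [hIcc]
  rw [← integral_div, ← integral_const_mul, ← integral_add (hpk.div_const γ) (hk.const_mul _),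
    ← integral_div]
  congr 1 with p
  ring

end

theorem tweedie_variance_general (γ : ℝ) (hγ : 0 < γ) (h : ℝ → ℝ)
    (hh_density : ∫ x in Set.Icc (0 : ℝ) 1, h x = 1)
    (B : ℝ → ℝ)
    (hB : ∀ pr, B pr = ∫ x in Set.Ioo (0 : ℝ) 1,
      x ^ (pr / γ - 1) * (1 - x) ^ ((1 - pr) / γ - 1))
    (f : ℝ → ℝ)
    (hf : ∀ t, f t = ∫ pr in Set.Ioo (0 : ℝ) 1,
      t ^ (pr / γ - 1) * (1 - t) ^ ((1 - pr) / γ - 1) / B pr * h pr)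
    (g : ℝ → ℝ)
    (hg : ∀ t, g t = t * (1 - t) * deriv f t / f t) :
    ∀ t ∈ Set.Ioo (0 : ℝ) 1, f t ≠ 0 →
      (∫ pr in Set.Ioo (0 : ℝ) 1,
          pr ^ 2 * (t ^ (pr / γ - 1) * (1 - t) ^ ((1 - pr) / γ - 1) / B pr)
            * h pr) / f t
        - ((∫ pr in Set.Ioo (0 : ℝ) 1,
            pr * (t ^ (pr / γ - 1) * (1 - t) ^ ((1 - pr) / γ - 1) / B pr)
              * h pr) / f t) ^ 2
      = γ * (t * (1 - t)) + γ ^ 2 * (t * (1 - t)) * (deriv g t - 2) := by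
  intro t ht hft
  obtain rfl : B = betaNormalizer γ := funext hB
  obtain rfl : g = fun s => s * (1 - s) * deriv f s / f s := funext hg
  set w : ℝ → ℝ := fun p => h p / betaNormalizer γ p
  have hh : IntegrableOn h (Icc 0 1) := integrable_of_integral_eq_one hh_density
  have hw : IntegrableOn w (Ioo 0 1) :=
    integrableOn_div_betaNormalizer hγ (hh.mono_set Ioo_subset_Icc_self)
  have hpw : IntegrableOn (fun p => p * w p) (Ioo 0 1) :=
    hw.continuousOn_mul_of_subset (continuousOn_id' _) isCompact_Icc measurableSet_Ioo
      Ioo_subset_Icc_self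
  have hm₀ : f = betaMixture γ w := funext fun s => by
    simp only [hf, betaMixture, betaKernel, w]
    congr 1 with p
    ring
  subst hm₀
  convert variance_eq_of_moment_ode hγ.ne' ht hft (fun s hs => hasDerivAt_betaMixture γ hw hs)
    (hasDerivAt_betaMixture γ hpw ht) using 4
  all_goals
    simp only [betaMixture, betaKernel, w]
    congr 1 with p
    ring

/-- Tweedie variance formula under the beta model:
`Var(p | p̃) = γ p̃(1-p̃) + γ² p̃(1-p̃)(g*'(p̃) - 2)` where
`g*(p̃) = p̃(1-p̃) f'(p̃)/f(p̃)`. -/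
theorem tweedie_variance (γ : ℝ) (hγ : 0 < γ) (h : ℝ → ℝ)
    (hh_nonneg : ∀ x, 0 ≤ h x) (hh_bdd : ∃ M, ∀ x, h x ≤ M)
    (hh_density : ∫ x in Set.Icc (0 : ℝ) 1, h x = 1)
    (B : ℝ → ℝ)
    (hB : ∀ pr, B pr = ∫ x in Set.Ioo (0 : ℝ) 1,
      x ^ (pr / γ - 1) * (1 - x) ^ ((1 - pr) / γ - 1))
    (f : ℝ → ℝ)
    (hf : ∀ t, f t = ∫ pr in Set.Ioo (0 : ℝ) 1,
      t ^ (pr / γ - 1) * (1 - t) ^ ((1 - pr) / γ - 1) / B pr * h pr)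
    (g : ℝ → ℝ)
    (hg : ∀ t, g t = t * (1 - t) * deriv f t / f t) :
    ∀ t ∈ Set.Ioo (0 : ℝ) 1, f t ≠ 0 →
      (∫ pr in Set.Ioo (0 : ℝ) 1,
          pr ^ 2 * (t ^ (pr / γ - 1) * (1 - t) ^ ((1 - pr) / γ - 1) / B pr)
            * h pr) / f t
        - ((∫ pr in Set.Ioo (0 : ℝ) 1,
            pr * (t ^ (pr / γ - 1) * (1 - t) ^ ((1 - pr) / γ - 1) / B pr)
              * h pr) / f t) ^ 2
      = γ * (t * (1 - t)) + γ ^ 2 * (t * (1 - t)) * (deriv g t - 2) :=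
  tweedie_variance_general γ hγ h hh_density B hB f hf g hg
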